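/- arXiv:2508.16470 — 3 statements merged into one kernel-verified Lean document; each statement's English description precedes it below -/
import Mathlib

section
/- Let N, M ≥ 1, let v_1,…,v_N ∈ ℂ, z_1,…,z_M ∈ ℂ, and let ξ^a_i, η^a_i ∈ ℂ for i = 1,…,N and a = 1,…,M. Define the N×N matrix L(z) by L(z)_{ij} = v_i δ_{ij} + Σ_{a=1}^M ξ^a_i η^a_j / (z − z_a) and the M×M matrix L̃(v) by L̃(v)_{ab} = z_a δ_{ab} + Σ_{i=1}^N ξ^a_i η^b_i / (v − v_i). Then for all v, z ∈ ℂ with z ∉ {z_1,…,z_M} and v ∉ {v_1,…,v_N}: det(v·1_N − L(z)) · det(z·1_M − Z) = det(z·1_M − L̃(v)) · det(v·1_N − V), where V = diag(v_1,…,v_N) and Z = diag(z_1,…,z_M). -/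
open Matrix

/-- Spectral duality between the rational gl_N Gaudin model with Lax matrix
`L(z)_{ij} = v_i δ_{ij} + Σ_a ξ^a_i η^a_j/(z − z_a)` and the dual gl_M Gaudin model
`L̃(v)_{ab} = z_a δ_{ab} + Σ_i ξ^a_i η^b_i/(v − v_i)`: the normalized characteristic
polynomials agree, `det(v·1 − L(z)) det(z·1 − Z) = det(z·1 − L̃(v)) det(v·1 − V)`. -/
theorem stmt1 (N M : ℕ) (hN : 1 ≤ N) (hM : 1 ≤ M)
    (vs : Fin N → ℂ) (zs : Fin M → ℂ)
    (ξ η : Fin M → Fin N → ℂ)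
    (v z : ℂ) (hz : ∀ a, z ≠ zs a) (hv : ∀ i, v ≠ vs i) :
    (v • (1 : Matrix (Fin N) (Fin N) ℂ) -
        Matrix.of (fun i j : Fin N =>
          (if i = j then vs i else 0) + ∑ a : Fin M, ξ a i * η a j / (z - zs a))).det *
      (z • (1 : Matrix (Fin M) (Fin M) ℂ) - Matrix.diagonal zs).det =
    (z • (1 : Matrix (Fin M) (Fin M) ℂ) -
        Matrix.of (fun a b : Fin M =>
          (if a = b then zs a else 0) + ∑ i : Fin N, ξ a i * η b i / (v - vs i))).det *
      (v • (1 : Matrix (Fin N) (Fin N) ℂ) - Matrix.diagonal vs).det := by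
  classical
  set A : Matrix (Fin N) (Fin N) ℂ := Matrix.diagonal (fun i => v - vs i) with hAdef
  set D : Matrix (Fin M) (Fin M) ℂ := Matrix.diagonal (fun a => z - zs a) with hDdef
  set B : Matrix (Fin N) (Fin M) ℂ := Matrix.of (fun i a => ξ a i) with hBdef
  set C : Matrix (Fin M) (Fin N) ℂ := Matrix.of (fun a i => η a i) with hCdef
  have hAmul : A * Matrix.diagonal (fun i => (v - vs i)⁻¹) = 1 := by
    rw [hAdef, Matrix.diagonal_mul_diagonal, ← Matrix.diagonal_one]
    exact congrArg Matrix.diagonal (funext fun i => mul_inv_cancel₀ (sub_ne_zero.2 (hv i)))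
  have hDmul : D * Matrix.diagonal (fun a => (z - zs a)⁻¹) = 1 := by
    rw [hDdef, Matrix.diagonal_mul_diagonal, ← Matrix.diagonal_one]
    exact congrArg Matrix.diagonal (funext fun a => mul_inv_cancel₀ (sub_ne_zero.2 (hz a)))
  haveI iA : Invertible A := invertibleOfRightInverse (a := A) (b := _) hAmul
  haveI iD : Invertible D := invertibleOfRightInverse (a := D) (b := _) hDmul
  have hAinv : ⅟A = Matrix.diagonal (fun i => (v - vs i)⁻¹) := invOf_eq_right_inv hAmul
  have hDinv : ⅟D = Matrix.diagonal (fun a => (z - zs a)⁻¹) := invOf_eq_right_inv hDmul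
  have hV : v • (1 : Matrix (Fin N) (Fin N) ℂ) - Matrix.diagonal vs = A := by
    rw [Matrix.smul_one_eq_diagonal, hAdef, Matrix.diagonal_sub]
  have hZ : z • (1 : Matrix (Fin M) (Fin M) ℂ) - Matrix.diagonal zs = D := by
    rw [Matrix.smul_one_eq_diagonal, hDdef, Matrix.diagonal_sub]
  have h1 : v • (1 : Matrix (Fin N) (Fin N) ℂ) -
        Matrix.of (fun i j : Fin N =>
          (if i = j then vs i else 0) + ∑ a : Fin M, ξ a i * η a j / (z - zs a)) =
      A - B * ⅟D * C := by
    ext i j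
    have hBD : B * ⅟D = Matrix.of (fun i a => ξ a i * (z - zs a)⁻¹) := by
      rw [hDinv]
      ext i' a
      simp [hBdef, Matrix.mul_diagonal]
    have hmul : (B * ⅟D * C) i j = ∑ a : Fin M, ξ a i * η a j / (z - zs a) := by
      rw [hBD]
      simp only [Matrix.mul_apply, Matrix.of_apply, hCdef]
      exact Finset.sum_congr rfl fun a _ => by rw [div_eq_mul_inv]; ring
    simp only [Matrix.sub_apply, Matrix.smul_apply, Matrix.one_apply, Matrix.of_apply,
      hmul, hAdef, Matrix.diagonal_apply, smul_eq_mul, div_eq_mul_inv]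
    split_ifs <;> ring
  have h2 : z • (1 : Matrix (Fin M) (Fin M) ℂ) -
        Matrix.of (fun a b : Fin M =>
          (if a = b then zs a else 0) + ∑ i : Fin N, ξ a i * η b i / (v - vs i)) =
      (D - C * ⅟A * B)ᵀ := by
    ext a b
    have hCA : C * ⅟A = Matrix.of (fun b i => η b i * (v - vs i)⁻¹) := by
      rw [hAinv]
      ext b' i
      simp [hCdef, Matrix.mul_diagonal]
    have hmul : (C * ⅟A * B) b a = ∑ i : Fin N, ξ a i * η b i / (v - vs i) := by
      rw [hCA]
      simp only [Matrix.mul_apply, Matrix.of_apply, hBdef]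
      exact Finset.sum_congr rfl fun i _ => by rw [div_eq_mul_inv]; ring
    simp only [Matrix.transpose_apply, Matrix.sub_apply, Matrix.smul_apply, Matrix.one_apply,
      Matrix.of_apply, hmul, hDdef, Matrix.diagonal_apply, smul_eq_mul, div_eq_mul_inv]
    rcases eq_or_ne a b with hab | hab
    · subst hab; rw [if_pos rfl, if_pos rfl, if_pos rfl]; ring
    · simp only [if_neg hab, if_neg (Ne.symm hab)]; ring
  have key : D.det * (A - B * ⅟D * C).det = A.det * (D - C * ⅟A * B).det := by
    rw [← Matrix.det_fromBlocks₂₂, Matrix.det_fromBlocks₁₁]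
  rw [h1, h2, hV, hZ, Matrix.det_transpose, mul_comm, key, mul_comm]
end

section
/- Let n ≥ 1, ω = e^{2πi/n}, Q = diag(1, ω, ω², …, ω^{n−1}) ∈ Mat_n(ℂ), and Λ ∈ Mat_n(ℂ) the cyclic shift matrix with entries Λ_{ij} = δ_{j, i+1 mod n}. For a = (a_1, a_2) ∈ ℤ² define I_a = e^{iπ a_1 a_2 / n} Q^{a_1} Λ^{a_2}. Then for all m, k ∈ ℤ²: [I_m, I_k] = I_m I_k − I_k I_m = 2i·sin((π/n)(k_1 m_2 − k_2 m_1))·I_{m+k}. -/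
open Matrix

noncomputable def clockMat (n : ℕ) : Matrix (Fin n) (Fin n) ℂ :=
  Matrix.diagonal fun i => Complex.exp (2 * (Real.pi : ℂ) * Complex.I / n) ^ (i : ℕ)

def shiftMat (n : ℕ) : Matrix (Fin n) (Fin n) ℂ :=
  Matrix.of fun i j : Fin n => if (j : ℕ) = ((i : ℕ) + 1) % n then 1 else 0

noncomputable def ww (n : ℕ) : ℂ := Complex.exp (2 * (Real.pi : ℂ) * Complex.I / n)

lemma ww_ne_zero (n : ℕ) : ww n ≠ 0 := Complex.exp_ne_zero _

lemma ww_pow_n {n : ℕ} (hn : 1 ≤ n) : ww n ^ n = 1 := by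
  have hn0 : (n : ℂ) ≠ 0 := Nat.cast_ne_zero.mpr (by omega)
  rw [ww, ← Complex.exp_nat_mul]
  have : (n : ℂ) * (2 * (Real.pi : ℂ) * Complex.I / n) = 2 * Real.pi * Complex.I := by
    field_simp
  rw [this, Complex.exp_two_pi_mul_I]

lemma ww_pow_mod {n : ℕ} (hn : 1 ≤ n) (x : ℕ) : ww n ^ (x % n) = ww n ^ x := by
  conv_rhs => rw [← Nat.div_add_mod x n]
  rw [pow_add, pow_mul, ww_pow_n hn, one_pow, one_mul]

lemma ww_zpow_mod {n : ℕ} (hn : 1 ≤ n) (x : ℤ) : ww n ^ (x % n) = ww n ^ x := by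
  conv_rhs => rw [← Int.mul_ediv_add_emod x n]
  rw [zpow_add₀ (ww_ne_zero n), _root_.zpow_mul, zpow_natCast, ww_pow_n hn, _root_.one_zpow, one_mul]

lemma shift_pow {n : ℕ} (hn : 1 ≤ n) (b : ℕ) :
    shiftMat n ^ b = Matrix.of fun i j : Fin n =>
      if (j : ℕ) = ((i : ℕ) + b) % n then 1 else 0 := by
  induction b with
  | zero =>
    ext i j
    simp [Matrix.one_apply, Fin.ext_iff, Nat.mod_eq_of_lt i.isLt, eq_comm]
  | succ b ih =>
    rw [pow_succ', ih]
    ext i j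
    rw [Matrix.mul_apply]
    have hlt : ((i : ℕ) + 1) % n < n := Nat.mod_lt _ (by omega)
    set l0 : Fin n := ⟨((i : ℕ) + 1) % n, hlt⟩ with hl0
    have : ∀ l : Fin n,
        (shiftMat n i l * Matrix.of (fun i j : Fin n =>
          if (j : ℕ) = ((i : ℕ) + b) % n then 1 else 0) l j)
        = if l = l0 then (if (j : ℕ) = ((l : ℕ) + b) % n then (1:ℂ) else 0) else 0 := by
      intro l
      simp only [shiftMat, Matrix.of_apply]
      by_cases h : (l : ℕ) = ((i : ℕ) + 1) % n
      · have : l = l0 := Fin.ext h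
        simp [this, hl0]
      · have : l ≠ l0 := fun hc => h (by rw [hc])
        simp [h, this]
    simp only [this]
    rw [Finset.sum_ite_eq' Finset.univ l0]
    simp only [Finset.mem_univ, if_true, Matrix.of_apply, hl0]
    have : (((i : ℕ) + 1) % n + b) % n = ((i : ℕ) + (b + 1)) % n := by
      conv_rhs => rw [show (i:ℕ) + (b+1) = (i:ℕ) + 1 + b by ring]
      conv_lhs => rw [Nat.add_mod]
      conv_rhs => rw [Nat.add_mod]
      simp [Nat.mod_mod_of_dvd]
    rw [this]

lemma shift_pow_n {n : ℕ} (hn : 1 ≤ n) : shiftMat n ^ n = 1 := by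
  rw [shift_pow hn]
  ext i j
  simp [Matrix.one_apply, Nat.add_mod_right, Nat.mod_eq_of_lt i.isLt, Fin.ext_iff, eq_comm]

lemma clock_pow_n {n : ℕ} (hn : 1 ≤ n) : clockMat n ^ n = 1 := by
  rw [clockMat, Matrix.diagonal_pow]
  have : ((fun i : Fin n => ww n ^ (i : ℕ)) ^ n) = fun _ : Fin n => (1 : ℂ) := by
    funext i
    simp only [Pi.pow_apply]
    rw [← pow_mul, mul_comm, pow_mul, ww_pow_n hn, one_pow]
  rw [show (fun i : Fin n => Complex.exp (2 * (Real.pi : ℂ) * Complex.I / n) ^ (i : ℕ)) =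
      (fun i : Fin n => ww n ^ (i : ℕ)) from rfl, this, Matrix.diagonal_one]

lemma swap1 {n : ℕ} (hn : 1 ≤ n) :
    shiftMat n * clockMat n = ww n • (clockMat n * shiftMat n) := by
  ext i j
  rw [clockMat, Matrix.mul_diagonal, Matrix.smul_apply, Matrix.diagonal_mul]
  simp only [shiftMat, Matrix.of_apply]
  by_cases h : (j : ℕ) = ((i : ℕ) + 1) % n
  · simp only [h, if_pos rfl, if_true, one_mul, mul_one]
    show ww n ^ (((i:ℕ)+1) % n) = ww n • (ww n ^ (i:ℕ))
    rw [ww_pow_mod hn, pow_succ, smul_eq_mul]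
    ring
  · simp [h]

lemma swapQ {n : ℕ} (hn : 1 ≤ n) (a : ℕ) :
    shiftMat n * clockMat n ^ a = (ww n ^ a) • (clockMat n ^ a * shiftMat n) := by
  induction a with
  | zero => simp
  | succ a ih =>
    rw [pow_succ, ← mul_assoc, ih, Matrix.smul_mul, mul_assoc, swap1 hn,
      Matrix.mul_smul, smul_smul, ← pow_succ]
    ring_nf
    rw [mul_assoc]

lemma swapN {n : ℕ} (hn : 1 ≤ n) (a b : ℕ) :
    shiftMat n ^ b * clockMat n ^ a = (ww n ^ (a * b)) • (clockMat n ^ a * shiftMat n ^ b) := by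
  induction b with
  | zero => simp
  | succ b ih =>
    rw [pow_succ, mul_assoc, swapQ hn, Matrix.mul_smul, ← mul_assoc, ih,
      Matrix.smul_mul, smul_smul, ← pow_add]
    rw [show a + a * b = a * (b + 1) by ring, mul_assoc]

lemma isUnit_det_of_pow_eq_one {n : ℕ} (hn : 1 ≤ n) {M : Matrix (Fin n) (Fin n) ℂ}
    (h : M ^ n = 1) : IsUnit M.det := by
  apply IsUnit.of_mul_eq_one (a := M.det) ((M ^ (n - 1)).det)
  rw [← Matrix.det_mul, ← pow_succ']
  rw [show n - 1 + 1 = n by omega, h, Matrix.det_one]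

lemma zpow_reduce {n : ℕ} (hn : 1 ≤ n) {M : Matrix (Fin n) (Fin n) ℂ}
    (h : M ^ n = 1) (a : ℤ) : M ^ a = M ^ ((a % n).toNat) := by
  have hdet := isUnit_det_of_pow_eq_one hn h
  have hnn : (0:ℤ) < (n:ℤ) := by exact_mod_cast hn
  conv_lhs => rw [← Int.mul_ediv_add_emod a n]
  rw [Matrix.zpow_add hdet, Matrix.zpow_mul _ hdet, zpow_natCast, h, Matrix.one_zpow,
    one_mul, ← Int.toNat_of_nonneg (Int.emod_nonneg a (by omega)), zpow_natCast,
    Int.toNat_natCast]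

lemma swapZ {n : ℕ} (hn : 1 ≤ n) (a b : ℤ) :
    shiftMat n ^ b * clockMat n ^ a =
      Complex.exp (2 * (Real.pi : ℂ) * Complex.I * a * b / n) •
        (clockMat n ^ a * shiftMat n ^ b) := by
  have hQ := clock_pow_n hn
  have hL := shift_pow_n hn
  set a' : ℕ := (a % n).toNat with ha'
  set b' : ℕ := (b % n).toNat with hb'
  rw [zpow_reduce hn hQ a, zpow_reduce hn hL b, ← ha', ← hb', swapN hn a' b']
  congr 1
  -- scalar identity: ww n ^ (a' * b') = exp (2πI a b / n)
  have ha'' : (a' : ℤ) = a % n := Int.toNat_of_nonneg (Int.emod_nonneg a (by omega))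
  have hb'' : (b' : ℤ) = b % n := Int.toNat_of_nonneg (Int.emod_nonneg b (by omega))
  have h1 : ww n ^ (a' * b') = ww n ^ ((a' * b' : ℕ) : ℤ) := by
    rw [zpow_natCast]
  have h2 : ((a' * b' : ℕ) : ℤ) % n = (a * b) % n := by
    push_cast
    rw [ha'', hb'', ← Int.mul_emod]
  have h3 : ww n ^ (a' * b') = ww n ^ (a * b) := by
    rw [h1, ← ww_zpow_mod hn, h2, ww_zpow_mod hn]
  rw [h3, ww, ← Complex.exp_int_mul]
  congr 1
  push_cast
  ring

noncomputable def ImatH (n : ℕ) (a : ℤ × ℤ) : Matrix (Fin n) (Fin n) ℂ :=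
  Complex.exp ((Real.pi : ℂ) * Complex.I * (a.1 : ℂ) * (a.2 : ℂ) / n) •
    (clockMat n ^ a.1 * shiftMat n ^ a.2)

lemma ImatH_mul {n : ℕ} (hn : 1 ≤ n) (m k : ℤ × ℤ) :
    ImatH n m * ImatH n k =
      Complex.exp ((Real.pi : ℂ) * Complex.I *
        ((k.1 : ℂ) * (m.2 : ℂ) - (k.2 : ℂ) * (m.1 : ℂ)) / n) • ImatH n (m + k) := by
  have hn0 : (n : ℂ) ≠ 0 := Nat.cast_ne_zero.mpr (by omega)
  have hQdet : IsUnit (clockMat n).det := isUnit_det_of_pow_eq_one hn (clock_pow_n hn)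
  have hLdet : IsUnit (shiftMat n).det := isUnit_det_of_pow_eq_one hn (shift_pow_n hn)
  rw [ImatH, ImatH, ImatH, Matrix.smul_mul, Matrix.mul_smul, smul_smul]
  rw [mul_assoc (clockMat n ^ m.1), ← mul_assoc (shiftMat n ^ m.2), swapZ hn k.1 m.2]
  simp only [Matrix.smul_mul, Matrix.mul_smul, smul_smul]
  have hmat : clockMat n ^ m.1 * (clockMat n ^ k.1 * shiftMat n ^ m.2 * shiftMat n ^ k.2)
      = clockMat n ^ (m.1 + k.1) * shiftMat n ^ (m.2 + k.2) := by
    rw [Matrix.zpow_add hQdet, Matrix.zpow_add hLdet]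
    simp only [mul_assoc]
  rw [hmat]
  simp only [Prod.fst_add, Prod.snd_add]
  congr 1
  rw [← Complex.exp_add, ← Complex.exp_add, ← Complex.exp_add]
  congr 1
  push_cast
  field_simp
  ring

/-- The finite-dimensional sin-algebra:
`[I_m, I_k] = 2i sin((π/n)(k₁m₂ − k₂m₁)) I_{m+k}` for all `m, k ∈ ℤ²`. -/
theorem stmt3 (n : ℕ) (hn : 1 ≤ n) :
    ∀ m k : ℤ × ℤ,
      ImatH n m * ImatH n k - ImatH n k * ImatH n m =
        (2 * Complex.I *
            Complex.sin ((Real.pi : ℂ) / n * ((k.1 : ℂ) * (m.2 : ℂ) - (k.2 : ℂ) * (m.1 : ℂ)))) •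
          ImatH n (m + k) := by
  intro m k
  rw [ImatH_mul hn m k, ImatH_mul hn k m, show k + m = m + k from add_comm k m, ← sub_smul]
  congr 1
  rw [Complex.sin]
  set S : ℂ := (k.1 : ℂ) * (m.2 : ℂ) - (k.2 : ℂ) * (m.1 : ℂ) with hS
  have h1 : (Real.pi : ℂ) * Complex.I * ((m.1 : ℂ) * (k.2 : ℂ) - (m.2 : ℂ) * (k.1 : ℂ)) / n
      = -((Real.pi : ℂ) / n * S) * Complex.I := by rw [hS]; ring
  have h2 : (Real.pi : ℂ) * Complex.I * S / n = ((Real.pi : ℂ) / n * S) * Complex.I := by ring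
  rw [h1, h2]
  ring_nf
  rw [Complex.I_sq]
  ring
end

section
/- Let M, N ≥ 1, let z_1, …, z_M ∈ ℂ be pairwise distinct, fix a ∈ {1,…,M}, and let S^1, …, S^M : ℝ → Mat_N(ℂ) be differentiable functions satisfying d/dt S^a = Σ_{k≠a} [S^a, S^k]/(z_a − z_k) and d/dt S^k = −[S^a, S^k]/(z_a − z_k) for k ≠ a. Then for every m ∈ ℕ and every z ∈ ℂ with z ∉ {z_1,…,z_M}, the function t ↦ tr( L(z,t)^m ), with L(z,t) = Σ_{k=1}^M S^k(t)/(z − z_k), is constant in t. -/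
open Matrix

private lemma entry_mul_deriv {N : ℕ} {A B : ℝ → Matrix (Fin N) (Fin N) ℂ}
    {A' B' : Matrix (Fin N) (Fin N) ℂ} {t : ℝ}
    (hA : ∀ i j, HasDerivAt (fun s => A s i j) (A' i j) t)
    (hB : ∀ i j, HasDerivAt (fun s => B s i j) (B' i j) t) :
    ∀ i j, HasDerivAt (fun s => (A s * B s) i j) ((A' * B t + A t * B') i j) t := by
  intro i j
  simp only [Matrix.mul_apply, Matrix.add_apply]
  rw [← Finset.sum_add_distrib]
  exact HasDerivAt.fun_sum fun k _ => (hA i k).mul (hB k j)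

/-- Conservation of the spectral invariants of the rational Gaudin model: along the
Gaudin flow `dS^a/dt = Σ_{k≠a} [S^a,S^k]/(z_a−z_k)`, `dS^k/dt = −[S^a,S^k]/(z_a−z_k)`
(k ≠ a), the functions `t ↦ tr(L(z,t)^m)` with `L(z,t) = Σ_k S^k(t)/(z−z_k)` are
constant in `t`, for every `m ∈ ℕ` and every `z` away from the poles.
Derivatives of matrix-valued functions are taken entrywise. -/
theorem stmt13 (M N : ℕ) (hM : 1 ≤ M) (hN : 1 ≤ N)
    (zs : Fin M → ℂ) (hzs : Function.Injective zs)
    (a : Fin M) (S : Fin M → ℝ → Matrix (Fin N) (Fin N) ℂ)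
    (hSa : ∀ (t : ℝ) (i j : Fin N),
      HasDerivAt (fun s => S a s i j)
        ((∑ k ∈ Finset.univ.erase a,
            (zs a - zs k)⁻¹ • (S a t * S k t - S k t * S a t)) i j) t)
    (hSk : ∀ k, k ≠ a → ∀ (t : ℝ) (i j : Fin N),
      HasDerivAt (fun s => S k s i j)
        ((-(zs a - zs k)⁻¹ • (S a t * S k t - S k t * S a t)) i j) t) :
    ∀ (m : ℕ) (z : ℂ), (∀ k, z ≠ zs k) → ∀ t s : ℝ,
      Matrix.trace ((∑ k : Fin M, (z - zs k)⁻¹ • S k t) ^ m) =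
        Matrix.trace ((∑ k : Fin M, (z - zs k)⁻¹ • S k s) ^ m) := by
  intro m z hz t s
  set L : ℝ → Matrix (Fin N) (Fin N) ℂ :=
    fun u => ∑ k : Fin M, (z - zs k)⁻¹ • S k u with hLdef
  set Ma : ℝ → Matrix (Fin N) (Fin N) ℂ := fun u => (z - zs a)⁻¹ • S a u with hMadef
  have hz' : ∀ k, z - zs k ≠ 0 := fun k => sub_ne_zero.mpr (hz k)
  -- the right-hand sides of the given ODEs, as matrices
  set E : ℝ → Fin M → Matrix (Fin N) (Fin N) ℂ := fun u k =>
    if k = a then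
      (∑ k' ∈ Finset.univ.erase a,
        (zs a - zs k')⁻¹ • (S a u * S k' u - S k' u * S a u))
    else (-(zs a - zs k)⁻¹ • (S a u * S k u - S k u * S a u)) with hEdef
  -- key algebraic identity : the Lax form of the flow
  have key : ∀ u : ℝ, ∑ k : Fin M, (z - zs k)⁻¹ • E u k
      = Ma u * L u - L u * Ma u := by
    intro u
    have lhs_eq : ∑ k : Fin M, (z - zs k)⁻¹ • E u k
        = ∑ k ∈ Finset.univ.erase a, ((z - zs a)⁻¹ * (z - zs k)⁻¹) •
            (S a u * S k u - S k u * S a u) := by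
      rw [← Finset.add_sum_erase _ _ (Finset.mem_univ a)]
      simp only [hEdef, if_pos rfl, Finset.smul_sum, smul_smul]
      rw [← Finset.sum_add_distrib]
      refine Finset.sum_congr rfl fun k hk => ?_
      rw [if_neg (Finset.ne_of_mem_erase hk), smul_smul, ← add_smul]
      congr 1
      have hak : zs a - zs k ≠ 0 :=
        sub_ne_zero.mpr fun h => (Finset.ne_of_mem_erase hk) (hzs h).symm
      field_simp [hz' a, hz' k, hak]
      ring
    have rhs_eq : Ma u * L u - L u * Ma u
        = ∑ k ∈ Finset.univ.erase a, ((z - zs a)⁻¹ * (z - zs k)⁻¹) •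
            (S a u * S k u - S k u * S a u) := by
      have h1 : Ma u * L u
          = ∑ k : Fin M, ((z - zs a)⁻¹ * (z - zs k)⁻¹) • (S a u * S k u) := by
        simp only [hMadef, hLdef, Finset.mul_sum, Finset.sum_mul, Finset.smul_sum,
          smul_mul_assoc, mul_smul_comm, smul_smul]
        exact Finset.sum_congr rfl fun k _ => by congr 1; ring
      have h2 : L u * Ma u
          = ∑ k : Fin M, ((z - zs a)⁻¹ * (z - zs k)⁻¹) • (S k u * S a u) := by
        simp only [hMadef, hLdef, Finset.mul_sum, Finset.sum_mul, Finset.smul_sum,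
          smul_mul_assoc, mul_smul_comm, smul_smul]
      have : Ma u * L u - L u * Ma u
          = ∑ k : Fin M, ((z - zs a)⁻¹ * (z - zs k)⁻¹) •
              (S a u * S k u - S k u * S a u) := by
        rw [h1, h2, ← Finset.sum_sub_distrib]
        exact Finset.sum_congr rfl fun k _ => (smul_sub _ _ _).symm
      rw [this, ← Finset.add_sum_erase _ _ (Finset.mem_univ a), sub_self, smul_zero,
        zero_add]
    rw [lhs_eq, rhs_eq]
  -- entrywise derivative of each S k
  have hSd : ∀ (k : Fin M) (u : ℝ) (i j : Fin N),
      HasDerivAt (fun v => S k v i j) (E u k i j) u := by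
    intro k u i j
    by_cases hk : k = a
    · subst hk; simpa [hEdef] using hSa u i j
    · simpa [hEdef, hk] using hSk k hk u i j
  -- entrywise derivative of L : Lax equation
  have hLd : ∀ (u : ℝ) (i j : Fin N),
      HasDerivAt (fun v => L v i j) ((Ma u * L u - L u * Ma u) i j) u := by
    intro u i j
    have h1 : HasDerivAt (fun v => L v i j)
        ((∑ k : Fin M, (z - zs k)⁻¹ • E u k) i j) u := by
      simp only [hLdef, Matrix.sum_apply, Matrix.smul_apply, smul_eq_mul]
      exact HasDerivAt.fun_sum fun k _ => ((hSd k u i j).const_mul _)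
    rwa [key u] at h1
  -- entrywise derivative of L^n : commutator form
  have hLpow : ∀ (n : ℕ) (u : ℝ) (i j : Fin N),
      HasDerivAt (fun v => (L v ^ n) i j)
        ((Ma u * L u ^ n - L u ^ n * Ma u) i j) u := by
    intro n
    induction n with
    | zero =>
      intro u i j
      simp only [pow_zero, mul_one, one_mul, sub_self, Matrix.zero_apply]
      exact hasDerivAt_const u _
    | succ n ih =>
      intro u i j
      have := entry_mul_deriv (A := fun v => L v ^ n) (B := L)
        (A' := Ma u * L u ^ n - L u ^ n * Ma u) (B' := Ma u * L u - L u * Ma u)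
        (t := u) (ih u) (hLd u) i j
      have heq : ((Ma u * L u ^ n - L u ^ n * Ma u) * L u
            + L u ^ n * (Ma u * L u - L u * Ma u))
          = Ma u * L u ^ (n + 1) - L u ^ (n + 1) * Ma u := by
        simp only [pow_succ]
        noncomm_ring
      rw [heq] at this
      simpa [pow_succ] using this
  -- derivative of trace (L^m) is zero
  have htr : ∀ u : ℝ, HasDerivAt (fun v => Matrix.trace (L v ^ m)) 0 u := by
    intro u
    have h1 : HasDerivAt (fun v => Matrix.trace (L v ^ m))
        (Matrix.trace (Ma u * L u ^ m - L u ^ m * Ma u)) u := by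
      simp only [Matrix.trace, Matrix.diag]
      exact HasDerivAt.fun_sum fun i _ => hLpow m u i i
    have : Matrix.trace (Ma u * L u ^ m - L u ^ m * Ma u) = 0 := by
      rw [Matrix.trace_sub, Matrix.trace_mul_comm, sub_self]
    rwa [this] at h1
  -- conclude constancy
  have hconst : ∀ u v : ℝ, Matrix.trace (L u ^ m) = Matrix.trace (L v ^ m) := by
    intro u v
    have hdiff : Differentiable ℝ (fun v => Matrix.trace (L v ^ m)) :=
      fun x => (htr x).differentiableAt
    have hderiv : ∀ x, deriv (fun v => Matrix.trace (L v ^ m)) x = 0 :=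
      fun x => (htr x).deriv
    exact is_const_of_deriv_eq_zero hdiff hderiv u v
  exact hconst t s
end
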